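/- Let d ≥ 1, let 0 < ρ_min ≤ ρ_max and c₁ > 0, and let ρ: ℝ^d → ℝ be a continuously differentiable ℤ^d-periodic function with ρ_min ≤ ρ(x) ≤ ρ_max and |∇ρ(x)| ≤ c₁ for all x. Let f: ℝ^d → ℝ be a twice continuously differentiable ℤ^d-periodic function, and let λ ≥ 0 be such that −div(ρ(x)² ∇f(x)) = λ ρ(x) f(x) for every x ∈ ℝ^d, with the normalization ∫_{[0,1)^d} f(x)² ρ(x) dx = 1. Then there exists a constant C > 0, depending only on ρ_min and c₁, such that ∫_{[0,1)^d} |Δf(x)| dx ≤ C (λ + √λ). -/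

import Mathlib

open MeasureTheory Real

/-- The Laplacian of `f : ℝ^d → ℝ`, i.e. the sum of the pure second partial derivatives. -/
noncomputable def lap {d : ℕ} (f : EuclideanSpace ℝ (Fin d) → ℝ) (x : EuclideanSpace ℝ (Fin d)) : ℝ :=
  ∑ i, fderiv ℝ (fun y => fderiv ℝ f y (EuclideanSpace.single i 1)) x (EuclideanSpace.single i 1)

/-- The divergence of a vector field `F : ℝ^d → ℝ^d`. -/
noncomputable def divg {d : ℕ} (F : EuclideanSpace ℝ (Fin d) → EuclideanSpace ℝ (Fin d))
    (x : EuclideanSpace ℝ (Fin d)) : ℝ :=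
  ∑ i, fderiv ℝ F x (EuclideanSpace.single i 1) i

/-- The vector in `ℝ^d` with integer coordinates `k`. -/
noncomputable def intVec (d : ℕ) (k : Fin d → ℤ) : EuclideanSpace ℝ (Fin d) :=
  (EuclideanSpace.equiv (Fin d) ℝ).symm (fun i => (k i : ℝ))

/-- The fundamental domain `[0,1)^d` of the flat torus. -/
def torusCube (d : ℕ) : Set (EuclideanSpace ℝ (Fin d)) :=
  {x | ∀ i, x i ∈ Set.Ico (0 : ℝ) 1}

/-!
Expanding `div(ρ² ∇f) = 2ρ ⟨∇ρ, ∇f⟩ + ρ² Δf`, the eigenvalue equation gives the pointwise bound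
`ρ_min |Δf| ≤ λ |f| + 2 c₁ |∇f|`. Integrating `div(f ρ² ∇f) = ρ² |∇f|² - λ ρ f²` over the cube,
where periodicity makes the boundary terms of the divergence theorem cancel, gives the energy
identity `∫ ρ² |∇f|² = λ`. As the cube has volume one, Cauchy–Schwarz turns `∫ ρ f² = 1` and
`∫ ρ² |∇f|² = λ` into `∫ |f| ≤ ρ_min^(-1/2)` and `∫ |∇f| ≤ √λ / ρ_min`.
-/

theorem integral_le_sqrt_div_of_le_weight {Ω : Type*} [MeasurableSpace Ω] {μ : Measure Ω}
    [IsProbabilityMeasure μ] {g w : Ω → ℝ} {m : ℝ} (hm : 0 < m) (hw : ∀ x, m ≤ w x)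
    (hg : MemLp g 2 μ) (hwg : Integrable (fun x => w x * g x ^ 2) μ) :
    ∫ x, g x ∂μ ≤ √((∫ x, w x * g x ^ 2 ∂μ) / m) := by
  have hsq : (∫ x, g x ∂μ) ^ 2 ≤ ∫ x, g x ^ 2 ∂μ := by
    have := ProbabilityTheory.variance_nonneg g μ
    rwa [ProbabilityTheory.variance_eq_sub hg, sub_nonneg] at this
  have hweight : ∫ x, g x ^ 2 ∂μ ≤ (∫ x, w x * g x ^ 2 ∂μ) / m := by
    rw [le_div_iff₀ hm, ← integral_mul_const]
    exact integral_mono (hg.integrable_sq.mul_const m) hwg fun x => by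
      rw [mul_comm]; exact mul_le_mul_of_nonneg_right (hw x) (sq_nonneg _)
  exact (le_abs_self _).trans (Real.abs_le_sqrt (hsq.trans hweight))

section Calculus

variable {F : Type*} [NormedAddCommGroup F] [InnerProductSpace ℝ F] [CompleteSpace F]

theorem Function.Periodic.gradient {f : F → ℝ} {v : F} (h : Function.Periodic f v) :
    Function.Periodic (gradient f) v := fun x => by
  simp only [_root_.gradient, ← fderiv_comp_add_right, funext h]

theorem contDiff_gradient {f : F → ℝ} {n : WithTop ℕ∞} (hf : ContDiff ℝ (n + 1) f) :
    ContDiff ℝ n (gradient f) :=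
  (InnerProductSpace.toDual ℝ F).symm.contDiff.comp (hf.fderiv_right le_rfl)

end Calculus

section Divergence

variable {d : ℕ}

theorem ContinuousLinearMap.sum_apply_single_mul (L : EuclideanSpace ℝ (Fin d) →L[ℝ] ℝ)
    (v : EuclideanSpace ℝ (Fin d)) : ∑ i, L (EuclideanSpace.single i 1) * v i = L v := by
  conv_rhs => rw [← (EuclideanSpace.basisFun (Fin d) ℝ).sum_repr v]
  simp [map_sum, mul_comm]

theorem divg_smul {c : EuclideanSpace ℝ (Fin d) → ℝ}
    {V : EuclideanSpace ℝ (Fin d) → EuclideanSpace ℝ (Fin d)} {x : EuclideanSpace ℝ (Fin d)}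
    (hc : DifferentiableAt ℝ c x) (hV : DifferentiableAt ℝ V x) :
    divg (fun y => c y • V y) x = fderiv ℝ c x (V x) + c x * divg V x := by
  simp only [divg, fderiv_fun_smul hc hV, Finset.mul_sum, ← Finset.sum_add_distrib,
    ← (fderiv ℝ c x).sum_apply_single_mul (V x)]
  simp [mul_comm, add_comm]

theorem ContDiff.continuous_divg {V : EuclideanSpace ℝ (Fin d) → EuclideanSpace ℝ (Fin d)}
    (hV : ContDiff ℝ 1 V) : Continuous (divg V) :=
  continuous_finsetSum _ fun i _ =>
    (EuclideanSpace.proj i).continuous.comp <|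
      (hV.continuous_fderiv one_ne_zero).clm_apply continuous_const

theorem lap_eq_divg_gradient {f : EuclideanSpace ℝ (Fin d) → ℝ} (hf : ContDiff ℝ 2 f)
    (x : EuclideanSpace ℝ (Fin d)) : lap f x = divg (gradient f) x := by
  have hpartial (i : Fin d) : (fun y => fderiv ℝ f y (EuclideanSpace.single i 1))
      = EuclideanSpace.proj i ∘ gradient f := by
    ext y
    simp [← inner_gradient_left, EuclideanSpace.inner_single_right]
  have hgrad : DifferentiableAt ℝ (gradient f) x :=
    (contDiff_gradient (n := 1) hf).differentiable one_ne_zero x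
  simp only [lap, divg, hpartial]
  refine Finset.sum_congr rfl fun i _ => ?_
  rw [((EuclideanSpace.proj i).hasFDerivAt.comp x hgrad.hasFDerivAt).fderiv]
  rfl

end Divergence

section Torus

open WithLp

variable {d : ℕ}

theorem toLp_preimage_torusCube :
    toLp 2 ⁻¹' torusCube d = Set.univ.pi fun _ : Fin d => Set.Ico (0 : ℝ) 1 := by
  ext x
  simp [torusCube]

theorem volume_torusCube : volume (torusCube d) = 1 := by
  rw [← MeasurePreserving.measure_preimage_equiv (f := MeasurableEquiv.toLp 2 (Fin d → ℝ))
    (PiLp.volume_preserving_toLp (Fin d)), MeasurableEquiv.coe_toLp, toLp_preimage_torusCube,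
    volume_pi_pi]
  simp

instance isProbabilityMeasure_restrict_torusCube :
    IsProbabilityMeasure (volume.restrict (torusCube d)) :=
  ⟨by rw [Measure.restrict_apply_univ, volume_torusCube]⟩

theorem setIntegral_torusCube_eq_Icc (g : EuclideanSpace ℝ (Fin d) → ℝ) :
    ∫ x in torusCube d, g x = ∫ x in Set.Icc (0 : Fin d → ℝ) 1, g (toLp 2 x) := by
  rw [← (PiLp.volume_preserving_toLp (Fin d)).setIntegral_preimage_emb
    (MeasurableEquiv.toLp 2 _).measurableEmbedding, toLp_preimage_torusCube, volume_pi]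
  exact setIntegral_congr_set Measure.univ_pi_Ico_ae_eq_Icc

theorem Continuous.integrableOn_torusCube {g : EuclideanSpace ℝ (Fin d) → ℝ}
    (hg : Continuous g) : IntegrableOn g (torusCube d) := by
  have hK : IsCompact (toLp 2 '' Set.Icc (0 : Fin d → ℝ) 1) :=
    isCompact_Icc.image (PiLp.continuous_toLp 2 _)
  refine (hg.continuousOn.integrableOn_compact hK).mono_set ?_
  intro x hx
  exact ⟨ofLp x, ⟨fun i => (hx i).1, fun i => (hx i).2.le⟩, toLp_ofLp 2 x⟩

theorem Continuous.memLp_two_torusCube {g : EuclideanSpace ℝ (Fin d) → ℝ} (hg : Continuous g) :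
    MemLp g 2 (volume.restrict (torusCube d)) :=
  (memLp_two_iff_integrable_sq hg.aestronglyMeasurable).2 (hg.pow 2).integrableOn_torusCube

end Torus

section DivergenceTheorem

open WithLp

theorem toLp_insertNth_one {n : ℕ} (i : Fin (n + 1)) (x : Fin n → ℝ) :
    toLp 2 (i.insertNth 1 x) = toLp 2 (i.insertNth 0 x) + intVec (n + 1) (Pi.single i 1) := by
  ext j
  rcases eq_or_ne j i with rfl | hj
  · simp [intVec]
  · obtain ⟨k, rfl⟩ := Fin.exists_succAbove_eq hj
    simp [intVec, Pi.single_apply, hj]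

variable {d : ℕ}

theorem integral_divg_torusCube_eq_zero
    {V : EuclideanSpace ℝ (Fin d) → EuclideanSpace ℝ (Fin d)} (hV : ContDiff ℝ 1 V)
    (hper : ∀ k, Function.Periodic V (intVec d k)) :
    ∫ x in torusCube d, divg V x = 0 := by
  cases d with
  | zero => simp [divg]
  | succ n =>
    set L := EuclideanSpace.equiv (Fin (n + 1)) ℝ
    have hG (y : Fin (n + 1) → ℝ) : HasFDerivAt (fun y => L (V (L.symm y)))
        ((L : _ →L[ℝ] _).comp ((fderiv ℝ V (L.symm y)).comp (L.symm : _ →L[ℝ] _))) y :=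
      L.hasFDerivAt.comp y (((hV.differentiable one_ne_zero) _).hasFDerivAt.comp y
        L.symm.hasFDerivAt)
    rw [setIntegral_torusCube_eq_Icc]
    refine (integral_divergence_of_hasFDerivAt_off_countable 0 1 zero_le_one _ _ ∅
      Set.countable_empty (L.continuous.comp (hV.continuous.comp L.symm.continuous)).continuousOn
      (fun y _ => hG y) ?_).trans (Finset.sum_eq_zero fun i _ => sub_eq_zero.2 ?_)
    · exact ((hV.continuous_divg).comp L.symm.continuous).integrableOn_Icc
    · refine integral_congr_ae (Filter.Eventually.of_forall fun x => ?_)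
      simp only [Pi.one_apply, Pi.zero_apply]
      show (V (toLp 2 _)) i = (V (toLp 2 _)) i
      rw [toLp_insertNth_one, hper]

end DivergenceTheorem

section Eigenfunction

open Function

variable {d : ℕ} {ρ f : EuclideanSpace ℝ (Fin d) → ℝ} {lam : ℝ}

theorem divg_sq_smul_gradient {x : EuclideanSpace ℝ (Fin d)} (hρ : DifferentiableAt ℝ ρ x)
    (hf : ContDiff ℝ 2 f) :
    divg (fun y => ρ y ^ 2 • gradient f y) x
      = 2 * ρ x * inner ℝ (gradient ρ x) (gradient f x) + ρ x ^ 2 * lap f x := by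
  rw [divg_smul (c := fun y => ρ y ^ 2) (hρ.pow 2)
    ((contDiff_gradient (n := 1) hf).differentiable one_ne_zero x),
    lap_eq_divg_gradient hf, fderiv_fun_pow 2 hρ, inner_gradient_left]
  simp only [smul_apply, nsmul_eq_mul, smul_eq_mul]
  ring

theorem mul_lap_eq_of_eigen {x : EuclideanSpace ℝ (Fin d)} (hρ : DifferentiableAt ℝ ρ x)
    (hf : ContDiff ℝ 2 f) (hx : ρ x ≠ 0)
    (heig : -divg (fun y => ρ y ^ 2 • gradient f y) x = lam * ρ x * f x) :
    ρ x * lap f x = -(lam * f x + 2 * inner ℝ (gradient ρ x) (gradient f x)) := by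
  rw [divg_sq_smul_gradient hρ hf] at heig
  refine mul_left_cancel₀ hx ?_
  linear_combination -heig

theorem abs_lap_le_of_eigen {x : EuclideanSpace ℝ (Fin d)} (hρ : DifferentiableAt ℝ ρ x)
    (hf : ContDiff ℝ 2 f) {ρmin c₁ : ℝ} (hmin : 0 < ρmin) (hρx : ρmin ≤ ρ x)
    (hgrad : ‖gradient ρ x‖ ≤ c₁) (hlam : 0 ≤ lam)
    (heig : -divg (fun y => ρ y ^ 2 • gradient f y) x = lam * ρ x * f x) :
    |lap f x| ≤ (lam * |f x| + 2 * c₁ * ‖gradient f x‖) / ρmin := by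
  have hρx' : ρ x ≠ 0 := (hmin.trans_le hρx).ne'
  rw [le_div_iff₀ hmin]
  calc |lap f x| * ρmin ≤ |ρ x * lap f x| := by
        rw [abs_mul, abs_of_pos (hmin.trans_le hρx), mul_comm]
        exact mul_le_mul_of_nonneg_right hρx (abs_nonneg _)
    _ ≤ lam * |f x| + 2 * |inner ℝ (gradient ρ x) (gradient f x)| := by
        rw [mul_lap_eq_of_eigen hρ hf hρx' heig, abs_neg]
        refine (abs_add_le _ _).trans_eq ?_
        rw [abs_mul, abs_mul, abs_of_nonneg hlam, abs_two]
    _ ≤ lam * |f x| + 2 * c₁ * ‖gradient f x‖ := by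
        have := (abs_real_inner_le_norm _ _).trans
          (mul_le_mul_of_nonneg_right hgrad (norm_nonneg (gradient f x)))
        linarith

theorem integral_sq_mul_norm_gradient_sq_eq_of_eigen (hρ : ContDiff ℝ 1 ρ)
    (hf : ContDiff ℝ 2 f) (hρper : ∀ k, Periodic ρ (intVec d k))
    (hfper : ∀ k, Periodic f (intVec d k))
    (heig : ∀ x, -divg (fun y => ρ y ^ 2 • gradient f y) x = lam * ρ x * f x) :
    ∫ x in torusCube d, ρ x ^ 2 * ‖gradient f x‖ ^ 2
      = lam * ∫ x in torusCube d, f x ^ 2 * ρ x := by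
  have hgrad : ContDiff ℝ 1 (gradient f) := contDiff_gradient (n := 1) hf
  have hf1 : ContDiff ℝ 1 f := hf.of_le one_le_two
  have hdiv (x : EuclideanSpace ℝ (Fin d)) :
      divg (fun y => f y • ρ y ^ 2 • gradient f y) x
        = ρ x ^ 2 * ‖gradient f x‖ ^ 2 - lam * (f x ^ 2 * ρ x) := by
    rw [divg_smul (V := fun y => ρ y ^ 2 • gradient f y) (hf1.differentiable one_ne_zero x)
      (((hρ.differentiable one_ne_zero x).pow 2).smul (hgrad.differentiable one_ne_zero x)),
      map_smul, ← inner_gradient_left, real_inner_self_eq_norm_sq, smul_eq_mul]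
    linear_combination -f x * heig x
  have hzero := integral_divg_torusCube_eq_zero
    (V := fun y => f y • ρ y ^ 2 • gradient f y) (hf1.smul ((hρ.pow 2).smul hgrad))
    fun k x => by simp only [hfper k x, hρper k x, (hfper k).gradient x]
  simp only [hdiv] at hzero
  rwa [integral_sub, integral_const_mul, sub_eq_zero] at hzero
  · exact ((hρ.continuous.pow 2).mul (hgrad.continuous.norm.pow 2)).integrableOn_torusCube
  · exact (((hf.continuous.pow 2).mul hρ.continuous).integrableOn_torusCube).const_mul lam

theorem integral_abs_lap_le_of_eigen (hρ : ContDiff ℝ 1 ρ) (hf : ContDiff ℝ 2 f) {ρmin c₁ : ℝ}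
    (hmin : 0 < ρmin) (hρmin : ∀ x, ρmin ≤ ρ x) (hgrad : ∀ x, ‖gradient ρ x‖ ≤ c₁)
    (hlam : 0 ≤ lam) (heig : ∀ x, -divg (fun y => ρ y ^ 2 • gradient f y) x = lam * ρ x * f x) :
    ∫ x in torusCube d, |lap f x| ≤
      (lam * (∫ x in torusCube d, |f x|) + 2 * c₁ * ∫ x in torusCube d, ‖gradient f x‖) / ρmin := by
  have hgradf : ContDiff ℝ 1 (gradient f) := contDiff_gradient (n := 1) hf
  have hint_f : IntegrableOn (fun x => |f x|) (torusCube d) :=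
    hf.continuous.abs.integrableOn_torusCube
  have hint_gradf : IntegrableOn (fun x => ‖gradient f x‖) (torusCube d) :=
    hgradf.continuous.norm.integrableOn_torusCube
  have hint_lap : IntegrableOn (fun x => |lap f x|) (torusCube d) := by
    simp only [lap_eq_divg_gradient hf]
    exact hgradf.continuous_divg.abs.integrableOn_torusCube
  rw [← integral_const_mul, ← integral_const_mul, ← integral_add, ← integral_div]
  · exact integral_mono hint_lap (((hint_f.const_mul _).add (hint_gradf.const_mul _)).div_const _)
      fun x => abs_lap_le_of_eigen (hρ.differentiable one_ne_zero x) hf hmin (hρmin x) (hgrad x)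
        hlam (heig x)
  · exact hint_f.const_mul _
  · exact hint_gradf.const_mul _

end Eigenfunction

/-- If `(λ, f)` is an eigenpair of the weighted Laplace–Beltrami operator
`Δ_ρ f = −(1/ρ) div(ρ² ∇f)` on the flat torus, i.e. `−div(ρ²∇f) = λρf` with the normalization
`∫_{[0,1)^d} f² ρ = 1`, where `ρ` is `C¹`, `ℤ^d`-periodic, `ρ_min ≤ ρ ≤ ρ_max` and `|∇ρ| ≤ c₁`,
then `∫_{[0,1)^d} |Δf| ≤ C (λ + √λ)` with `C > 0` depending only on `ρ_min` and `c₁`. -/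
theorem stmt12 (ρmin c₁ : ℝ) (h1 : 0 < ρmin) (h3 : 0 < c₁) :
    ∃ C : ℝ, 0 < C ∧
      ∀ (d : ℕ), 1 ≤ d →
      ∀ ρmax : ℝ, ρmin ≤ ρmax →
      ∀ ρ : EuclideanSpace ℝ (Fin d) → ℝ, ContDiff ℝ 1 ρ →
      (∀ (x : EuclideanSpace ℝ (Fin d)) (k : Fin d → ℤ), ρ (x + intVec d k) = ρ x) →
      (∀ x, ρmin ≤ ρ x ∧ ρ x ≤ ρmax) →
      (∀ x, ‖gradient ρ x‖ ≤ c₁) →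
      ∀ f : EuclideanSpace ℝ (Fin d) → ℝ, ContDiff ℝ 2 f →
      (∀ (x : EuclideanSpace ℝ (Fin d)) (k : Fin d → ℤ), f (x + intVec d k) = f x) →
      ∀ lam : ℝ, 0 ≤ lam →
      (∀ x, -divg (fun y => (ρ y) ^ 2 • gradient f y) x = lam * ρ x * f x) →
      (∫ x in torusCube d, (f x) ^ 2 * ρ x) = 1 →
      (∫ x in torusCube d, |lap f x|) ≤ C * (lam + Real.sqrt lam) := by
  refine ⟨√(1 / ρmin) / ρmin + 2 * c₁ / ρmin ^ 2, by positivity, ?_⟩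
  intro d _ ρmax _ ρ hρ hρper hρbd hρgrad f hf hfper lam hlam heig hnorm
  have hρmin x : ρmin ≤ ρ x := (hρbd x).1
  have hgradf : Continuous (gradient f) := (contDiff_gradient (n := 1) hf).continuous
  have hf_L1 : ∫ x in torusCube d, |f x| ≤ √(1 / ρmin) := by
    have := integral_le_sqrt_div_of_le_weight h1 hρmin hf.continuous.abs.memLp_two_torusCube
      ((hρ.continuous.mul (hf.continuous.abs.pow 2))).integrableOn_torusCube
    simpa only [sq_abs, mul_comm (ρ _), hnorm] using this
  have hgradf_L1 : ∫ x in torusCube d, ‖gradient f x‖ ≤ √lam / ρmin := by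
    have := integral_le_sqrt_div_of_le_weight (pow_pos h1 2)
      (fun x => pow_le_pow_left₀ h1.le (hρmin x) 2) hgradf.norm.memLp_two_torusCube
      ((hρ.continuous.pow 2).mul (hgradf.norm.pow 2)).integrableOn_torusCube
    rwa [integral_sq_mul_norm_gradient_sq_eq_of_eigen hρ hf (fun k x => hρper x k)
      (fun k x => hfper x k) heig, hnorm, mul_one, sqrt_div' _ (sq_nonneg _), sqrt_sq h1.le] at this
  calc ∫ x in torusCube d, |lap f x|
      ≤ (lam * (∫ x in torusCube d, |f x|) + 2 * c₁ * ∫ x in torusCube d, ‖gradient f x‖) / ρmin :=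
        integral_abs_lap_le_of_eigen hρ hf h1 hρmin hρgrad hlam heig
    _ ≤ (lam * √(1 / ρmin) + 2 * c₁ * (√lam / ρmin)) / ρmin := by gcongr
    _ = √(1 / ρmin) / ρmin * lam + 2 * c₁ / ρmin ^ 2 * √lam := by ring
    _ ≤ (√(1 / ρmin) / ρmin + 2 * c₁ / ρmin ^ 2) * (lam + √lam) := by
        have : 0 ≤ √(1 / ρmin) / ρmin * √lam + 2 * c₁ / ρmin ^ 2 * lam := by positivity
        linarith
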